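/- arXiv:2409.03546 — 2 statements merged into one kernel-verified Lean document; each statement's English description precedes it below -/
import Mathlib

section
/- Let p be a prime and let Λ = ℤ_p⟦T⟧ be the power series ring in one variable over the ring of p-adic integers. If M is a finitely generated Λ-module such that the quotient M/TM is a finite set, then the T-torsion submodule M[T] = {x ∈ M : T·x = 0} is a finite set. -/
/-!
Since `M` is a noetherian `Λ`-module, `M[T]` is finitely generated. If `m = #(M/TM)`, then
`m • M ⊆ T • M`, and Cayley–Hamilton yields an annihilator of `M` of the form `m ^ n + T b`.
Hence `M[T]` is killed by `T` and by the nonzero constant `m ^ n`, so it is a finitely generated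
module over the finite ring `ℤ_p / (m ^ n)`.
-/

open PowerSeries Submodule

instance PadicInt.hasFiniteQuotients (p : ℕ) [Fact p.Prime] : Ring.HasFiniteQuotients ℤ_[p] where
  finiteQuotient {I} hI := by
    obtain ⟨n, rfl⟩ := PadicInt.ideal_eq_span_pow_p hI
    rw [← PadicInt.ker_toZModPow]
    exact Finite.of_injective _ (RingHom.kerLift_injective _)

theorem Module.finite_of_le_annihilator {R M : Type*} [CommRing R] [AddCommGroup M] [Module R M]
    [Module.Finite R M] (I : Ideal R) [Finite (R ⧸ I)] (hI : I ≤ Module.annihilator R M) :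
    Finite M := by
  have hM : Module.IsTorsionBySet R M I := fun x a ↦ Module.mem_annihilator.mp (hI a.2) x
  let := hM.module
  have : Module.Finite (R ⧸ I) M := Module.Finite.of_restrictScalars_finite R _ _
  exact Module.finite_of_finite (R ⧸ I)

theorem Submodule.natCard_smul_mem_of_finite_quotient {R M : Type*} [Ring R] [AddCommGroup M]
    [Module R M] (N : Submodule R M) [Finite (M ⧸ N)] (x : M) :
    (Nat.card (M ⧸ N) : R) • x ∈ N := by
  rw [Nat.cast_smul_eq_nsmul, ← Submodule.Quotient.mk_eq_zero, Submodule.Quotient.mk_smul]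
  exact card_nsmul_eq_zero'

theorem exists_pow_add_smul_eq_zero_of_smul_mem_smul_top {R M : Type*} [CommRing R]
    [AddCommGroup M] [Module R M] [Module.Finite R M] (I : Ideal R) (r : R)
    (hr : ∀ x : M, r • x ∈ I • (⊤ : Submodule R M)) :
    ∃ n : ℕ, ∃ b ∈ I, ∀ x : M, (r ^ n + b) • x = 0 := by
  obtain ⟨P, hmonic, -, hcoeff, hP⟩ :=
    LinearMap.exists_monic_and_natDegree_eq_and_coeff_mem_pow_and_aeval_eq_zero R
      (algebraMap R (Module.End R M) r) I (by rintro _ ⟨x, rfl⟩; exact hr x)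
  rw [Polynomial.aeval_algebraMap_apply_eq_algebraMap_eval] at hP
  have hPr : P.eval r - r ^ P.natDegree = ∑ i ∈ Finset.range P.natDegree, P.coeff i * r ^ i := by
    rw [Polynomial.eval_eq_sum_range, Finset.sum_range_succ, hmonic.coeff_natDegree, one_mul,
      add_sub_cancel_right]
  refine ⟨P.natDegree, P.eval r - r ^ P.natDegree, ?_, fun x ↦ ?_⟩
  · rw [hPr]
    exact Ideal.sum_mem _ fun i hi ↦ Ideal.mul_mem_right _ _
      (Ideal.pow_le_self (Nat.sub_ne_zero_of_lt (Finset.mem_range.mp hi)) (hcoeff i))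
  · simpa only [add_sub_cancel, Module.algebraMap_end_apply, LinearMap.zero_apply]
      using LinearMap.congr_fun hP x

namespace PowerSeries

variable {R : Type*} [CommRing R]

theorem comap_constantCoeff_span_singleton_le (c : R) :
    (Ideal.span {c}).comap (constantCoeff (R := R)) ≤ Ideal.span {(X : R⟦X⟧), C c} := by
  intro a ha
  obtain ⟨u, hu⟩ := Ideal.mem_span_singleton'.mp (Ideal.mem_comap.mp ha)
  obtain ⟨d, hd⟩ : X ∣ a - C u * C c := X_dvd_iff.mpr (by simp [hu])
  rw [← sub_add_cancel a (C u * C c), hd]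
  exact Ideal.add_mem _ (Ideal.mul_mem_right _ _ (Ideal.subset_span (by simp)))
    (Ideal.mul_mem_left _ _ (Ideal.subset_span (by simp)))

variable {M : Type*} [AddCommGroup M] [Module R⟦X⟧ M]

theorem finite_torsionBy_X_of_finite_quotient [Ring.HasFiniteQuotients R] [CharZero R]
    [Module.Finite R⟦X⟧ M] (hfin : Finite (M ⧸ (Ideal.span {(X : R⟦X⟧)} • ⊤ : Submodule R⟦X⟧ M))) :
    Finite (torsionBy R⟦X⟧ M X) := by
  set m := Nat.card (M ⧸ (Ideal.span {(X : R⟦X⟧)} • ⊤ : Submodule R⟦X⟧ M))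
  obtain ⟨n, b, hb, hkill⟩ := exists_pow_add_smul_eq_zero_of_smul_mem_smul_top _ (m : R⟦X⟧)
    (natCard_smul_mem_of_finite_quotient _)
  obtain ⟨e, rfl⟩ := Ideal.mem_span_singleton'.mp hb
  set c : R := ((m ^ n : ℕ) : R)
  have hX : X ∈ Module.annihilator R⟦X⟧ (torsionBy R⟦X⟧ M X) :=
    Module.mem_annihilator.mpr fun x ↦ Subtype.ext ((mem_torsionBy_iff _ _).mp x.2)
  have hC : C c ∈ Module.annihilator R⟦X⟧ (torsionBy R⟦X⟧ M X) := by
    refine Module.mem_annihilator.mpr fun x ↦ Subtype.ext ?_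
    have hx : X • (x : M) = 0 := (mem_torsionBy_iff _ _).mp x.2
    simpa [c, add_smul, mul_smul, hx] using hkill x
  have hc : c ≠ 0 := Nat.cast_ne_zero.mpr (pow_ne_zero _ Nat.card_pos.ne')
  have := Ring.HasFiniteQuotients.finiteQuotient (Ideal.span_singleton_eq_bot.not.mpr hc)
  have : Finite (R⟦X⟧ ⧸ (Ideal.span {c}).comap constantCoeff) :=
    Finite.of_injective _ Ideal.quotientMap_injective
  exact Module.finite_of_le_annihilator _ ((comap_constantCoeff_span_singleton_le c).trans
    (Ideal.span_le.mpr (Set.insert_subset_iff.mpr ⟨hX, Set.singleton_subset_iff.mpr hC⟩)))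

end PowerSeries

/-- If `M` is a finitely generated module over `Λ = ℤ_p⟦T⟧` such that `M/TM` is finite,
then the `T`-torsion submodule `M[T] = {x ∈ M : T·x = 0}` is finite. -/
theorem stmt1 (p : ℕ) [Fact p.Prime]
    (M : Type*) [AddCommGroup M] [Module (PowerSeries ℤ_[p]) M]
    [Module.Finite (PowerSeries ℤ_[p]) M]
    (hfin : Finite (M ⧸ (Ideal.span {(PowerSeries.X : PowerSeries ℤ_[p])} •
      (⊤ : Submodule (PowerSeries ℤ_[p]) M)))) :
    Set.Finite {x : M | (PowerSeries.X : PowerSeries ℤ_[p]) • x = 0} :=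
  have := finite_torsionBy_X_of_finite_quotient hfin
  Set.toFinite (torsionBy ℤ_[p]⟦X⟧ M X : Set M)
end

section
/- Let p be a prime and n ≥ 1 an integer, and let Φ ∈ ℚ_p[X] be the p^n-th cyclotomic polynomial regarded as a polynomial over the field ℚ_p of p-adic numbers. Let V and W be modules over the polynomial ring ℚ_p[X] such that Φ annihilates V (i.e., Φ·v = 0 for all v ∈ V), and let f : V → W be a ℚ_p[X]-linear map that is not identically zero. Then the image of f has ℚ_p-dimension at least p^n − p^{n−1}. -/
/-!
The `p ^ n`-th cyclotomic polynomial `Φ` becomes Eisenstein at `p` after `X ↦ X + 1`, so it is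
irreducible over `ℤ_p` and, by Gauss's lemma, over `ℚ_p`. If `f v ≠ 0`, then `Φ` kills `w = f v`
and every `g` with `g • w = 0` is a multiple of `Φ` (otherwise `1 = aΦ + bg` kills `w`). Hence
`g ↦ g • w` is injective on polynomials of degree `< deg Φ = p ^ n - p ^ (n - 1)`, and its image
lies in the range of `f`.
-/

open Polynomial

theorem Irreducible.dvd_of_smul_eq_zero {R M : Type*} [CommRing R] [IsBezout R]
    [AddCommGroup M] [Module R M] {Φ g : R} (hΦ : Irreducible Φ) {w : M} (hw : w ≠ 0)
    (hΦw : Φ • w = 0) (hgw : g • w = 0) : Φ ∣ g := by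
  by_contra hndvd
  obtain ⟨a, b, hab⟩ := hΦ.coprime_iff_not_dvd.2 hndvd
  apply hw
  calc w = (a * Φ + b * g) • w := by rw [hab, one_smul]
    _ = 0 := by rw [add_smul, mul_smul, mul_smul, hΦw, hgw, smul_zero, smul_zero, add_zero]

theorem Polynomial.natDegree_le_rank_of_smul_eq_zero {K M : Type*} [Field K] [AddCommGroup M]
    [Module K M] [Module K[X] M] [IsScalarTower K K[X] M] {Φ : K[X]} (hΦ : Irreducible Φ)
    (N : Submodule K[X] M) {w : M} (hwN : w ∈ N) (hw : w ≠ 0) (hΦw : Φ • w = 0) :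
    (Φ.natDegree : Cardinal) ≤ Module.rank K N := by
  let evalAt : K[X]_Φ.natDegree →ₗ[K] N :=
    { toFun g := ⟨(g : K[X]) • w, N.smul_mem _ hwN⟩
      map_add' g h := by ext; simp [add_smul]
      map_smul' c g := by ext; simp [smul_assoc] }
  have hinj : Function.Injective evalAt := by
    refine (injective_iff_map_eq_zero evalAt).2 fun g hg => Subtype.ext ?_
    have hdvd := hΦ.dvd_of_smul_eq_zero hw hΦw (congrArg Subtype.val hg)
    refine eq_zero_of_dvd_of_degree_lt hdvd ?_
    rw [degree_eq_natDegree hΦ.ne_zero]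
    exact mem_degreeLT.1 g.2
  have := evalAt.lift_rank_le_of_injective hinj
  rwa [(degreeLTEquiv K _).rank_eq, rank_fin_fun, Cardinal.lift_natCast,
    Cardinal.nat_le_lift_iff] at this

namespace PadicInt

variable {p : ℕ} [Fact p.Prime]

theorem isEisensteinAt_taylor_one_cyclotomic_prime_pow (m : ℕ) :
    (taylor 1 (cyclotomic (p ^ (m + 1)) ℤ_[p])).IsEisensteinAt (Ideal.span {(p : ℤ_[p])}) := by
  have hℤ : (taylor 1 (cyclotomic (p ^ (m + 1)) ℤ)).IsEisensteinAt
      (Submodule.span ℤ {(p : ℤ)}) := by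
    simpa [taylor_apply] using cyclotomic_prime_pow_comp_X_add_one_isEisensteinAt p m
  have hmap : (taylor 1 (cyclotomic (p ^ (m + 1)) ℤ)).map (Int.castRingHom ℤ_[p]) =
      taylor 1 (cyclotomic (p ^ (m + 1)) ℤ_[p]) := by
    simp [map_taylor]
  have hp := prime_p (p := p)
  refine ⟨?_, fun {k} hk => ?_, ?_⟩
  · rw [leadingCoeff_taylor, (cyclotomic.monic _ _).leadingCoeff, Ideal.mem_span_singleton]
    exact hp.not_dvd_one
  · rw [← hmap] at hk ⊢
    simpa [Ideal.map_span] using (hℤ.isWeaklyEisensteinAt.map (Int.castRingHom ℤ_[p])).mem hk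
  · rw [taylor_coeff_zero, eval_one_cyclotomic_prime_pow, Ideal.span_singleton_pow,
      Ideal.mem_span_singleton]
    simpa using (pow_dvd_pow_iff hp.ne_zero hp.not_isUnit (n := 2) (m := 1)).not.2 (by decide)

end PadicInt

theorem Padic.irreducible_cyclotomic_prime_pow {p : ℕ} [Fact p.Prime] {n : ℕ} (hn : 0 < n) :
    Irreducible (cyclotomic (p ^ n) ℚ_[p]) := by
  obtain ⟨m, rfl⟩ := Nat.exists_eq_add_one_of_ne_zero hn.ne'
  have hmonic : (taylor 1 (cyclotomic (p ^ (m + 1)) ℤ_[p])).Monic := by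
    rw [Monic, leadingCoeff_taylor]; exact cyclotomic.monic _ _
  have hirr : Irreducible (taylor 1 (cyclotomic (p ^ (m + 1)) ℤ_[p])) :=
    (PadicInt.isEisensteinAt_taylor_one_cyclotomic_prime_pow m).irreducible
      ((Ideal.span_singleton_prime PadicInt.prime_p.ne_zero).2 PadicInt.prime_p)
      hmonic.isPrimitive
      (by rw [natDegree_taylor, natDegree_cyclotomic]
          exact Nat.totient_pos.2 (pow_pos (Fact.out : p.Prime).pos _))
  rw [hmonic.irreducible_iff_irreducible_map_fraction_map (K := ℚ_[p]), map_taylor,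
    map_cyclotomic, map_one] at hirr
  exact (MulEquiv.irreducible_iff (taylorEquiv (1 : ℚ_[p]))).1 hirr

theorem Nat.totient_prime_pow_eq_sub {p n : ℕ} (hp : p.Prime) (hn : 0 < n) :
    totient (p ^ n) = p ^ n - p ^ (n - 1) := by
  rw [totient_prime_pow hp hn, Nat.mul_sub_one, pow_sub_one_mul hn.ne']

theorem stmt3_general (p : ℕ) [Fact p.Prime] (n : ℕ) (hn : 1 ≤ n)
    (V W : Type*) [AddCommGroup V] [AddCommGroup W]
    [Module ℚ_[p] W]
    [Module (Polynomial ℚ_[p]) V] [Module (Polynomial ℚ_[p]) W]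
    [IsScalarTower ℚ_[p] (Polynomial ℚ_[p]) W]
    (hann : ∀ v : V, (Polynomial.cyclotomic (p ^ n) ℚ_[p]) • v = 0)
    (f : V →ₗ[Polynomial ℚ_[p]] W) (hf : f ≠ 0) :
    ((p ^ n - p ^ (n - 1) : ℕ) : Cardinal) ≤ Module.rank ℚ_[p] (LinearMap.range f) := by
  obtain ⟨v, hv⟩ : ∃ v, f v ≠ 0 := by simpa [LinearMap.ext_iff] using hf
  have hdeg : (cyclotomic (p ^ n) ℚ_[p]).natDegree = p ^ n - p ^ (n - 1) := by
    rw [natDegree_cyclotomic, Nat.totient_prime_pow_eq_sub Fact.out hn]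
  rw [← hdeg]
  exact natDegree_le_rank_of_smul_eq_zero (Padic.irreducible_cyclotomic_prime_pow hn)
    (LinearMap.range f) (LinearMap.mem_range_self f v) hv (by rw [← map_smul, hann, map_zero])

/-- If `Φ` is the `p^n`-th cyclotomic polynomial over `ℚ_p` (for `n ≥ 1`), `V`, `W` are
`ℚ_p[X]`-modules with `Φ` annihilating `V`, and `f : V → W` is a nonzero `ℚ_p[X]`-linear map,
then the image of `f` has `ℚ_p`-dimension at least `p^n − p^(n−1)`. -/
theorem stmt3 (p : ℕ) [Fact p.Prime] (n : ℕ) (hn : 1 ≤ n)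
    (V W : Type*) [AddCommGroup V] [AddCommGroup W]
    [Module ℚ_[p] V] [Module ℚ_[p] W]
    [Module (Polynomial ℚ_[p]) V] [Module (Polynomial ℚ_[p]) W]
    [IsScalarTower ℚ_[p] (Polynomial ℚ_[p]) V]
    [IsScalarTower ℚ_[p] (Polynomial ℚ_[p]) W]
    (hann : ∀ v : V, (Polynomial.cyclotomic (p ^ n) ℚ_[p]) • v = 0)
    (f : V →ₗ[Polynomial ℚ_[p]] W) (hf : f ≠ 0) :
    ((p ^ n - p ^ (n - 1) : ℕ) : Cardinal) ≤ Module.rank ℚ_[p] (LinearMap.range f) :=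
  stmt3_general p n hn V W hann f hf
end
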